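/- arXiv:2511.00914 — 2 statements merged into one kernel-verified Lean document; each statement's English description precedes it below -/
import Mathlib

section
/- Every slim edge weight h : N₂ → ℂ on the countable complete graph K_ℕ is light; that is, for every n ∈ ℕ₀ the series Σ_{w∈W(n)} h(w) over all walks of length n starting at vertex 1 converges absolutely. -/
open Filter

/-- The weight of a walk `⟨w 0, …, w n⟩` in `K_ℕ`: the product of the edge weights. -/
noncomputable def wt (h : Sym2 ℕ → ℂ) {n : ℕ} (w : Fin (n + 1) → ℕ) : ℂ :=
  ∏ i : Fin n, h s(w i.castSucc, w i.succ)

/-- `w` is a walk: consecutive vertices are distinct. -/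
def IsWalk {n : ℕ} (w : Fin (n + 1) → ℕ) : Prop :=
  ∀ i : Fin n, w i.castSucc ≠ w i.succ

/-- `W n`: walks of length `n` in `K_ℕ` starting at vertex `1`. -/
def W (n : ℕ) : Set (Fin (n + 1) → ℕ) :=
  {w | w 0 = 1 ∧ IsWalk w}

/-- A weight `h` is light if for every `n` the series of walk weights over `W n`
converges absolutely. -/
def Light (h : Sym2 ℕ → ℂ) : Prop :=
  ∀ n : ℕ, Summable fun w : W n => ‖wt h w.1‖

/-- `u` belongs to `V(h,n)`: it is reachable from `1` by a walk of length at most `n`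
all of whose edges have nonzero weight. -/
def ReachableIn (h : Sym2 ℕ → ℂ) (n : ℕ) (u : ℕ) : Prop :=
  ∃ m, m ≤ n ∧ ∃ w : Fin (m + 1) → ℕ, w 0 = 1 ∧ IsWalk w ∧
    (∀ i : Fin m, h s(w i.castSucc, w i.succ) ≠ 0) ∧ w (Fin.last m) = u

/-- `u ∈ V(h)`: reachable from `1` by a walk with all edge weights nonzero. -/
def Reachable (h : Sym2 ℕ → ℂ) (u : ℕ) : Prop :=
  ∃ n, ReachableIn h n u

/-- A weight `h` is slim if for every `n` there is `c > 0` bounding all finite partial sums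
`Σ_{v∈X} |h({u,v})|` over vertices `u ∈ V(h,n)` and finite `X ⊆ ℕ ∖ {u}`. -/
def Slim (h : Sym2 ℕ → ℂ) : Prop :=
  ∀ n : ℕ, ∃ c : ℝ, 0 < c ∧ ∀ u : ℕ, ReachableIn h n u →
    ∀ X : Finset ℕ, u ∉ X → ∑ v ∈ X, ‖h s(u, v)‖ ≤ c

/-!
Bound the finite partial sums of `Σ_{w ∈ W(n)} |h(w)|` by `c(0) ⋯ c(n-1)`, by induction on `n`.
Grouping the walks of length `n + 1` by their prefix `p` of length `n` factors out `|h(p)|`; the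
remaining sum runs over `|h({u,v})|` for distinct last vertices `v ≠ u`, where `u` is the endpoint
of `p`. If `h(p) ≠ 0` then `p` witnesses `u ∈ V(h,n)`, so slimness bounds that sum by `c(n)`.
-/

open Finset

lemma wt_eq_wt_init_mul (h : Sym2 ℕ → ℂ) {n : ℕ} (w : Fin (n + 2) → ℕ) :
    wt h w = wt h (Fin.init w) * h s(Fin.init w (Fin.last n), w (Fin.last (n + 1))) := by
  rw [wt, Fin.prod_univ_castSucc, Fin.succ_last]
  rfl

lemma init_mem_W {n : ℕ} {w : Fin (n + 2) → ℕ} (hw : w ∈ W (n + 1)) : Fin.init w ∈ W n :=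
  ⟨hw.1, fun i => hw.2 i.castSucc⟩

lemma W_zero : W 0 = {fun _ => 1} := by
  ext w
  refine ⟨fun hw => funext fun i => Fin.fin_one_eq_zero i ▸ hw.1, ?_⟩
  rintro rfl
  exact ⟨rfl, finZeroElim⟩

lemma reachableIn_of_wt_ne_zero {h : Sym2 ℕ → ℂ} {n : ℕ} {w : Fin (n + 1) → ℕ} (hw : w ∈ W n)
    (hwt : wt h w ≠ 0) : ReachableIn h n (w (Fin.last n)) :=
  ⟨n, le_rfl, w, hw.1, hw.2, fun i hi => hwt (prod_eq_zero (mem_univ i) hi), rfl⟩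

section Fiber

variable (h : Sym2 ℕ → ℂ) {n : ℕ} (p : Fin (n + 1) → ℕ) (F : Finset (Fin (n + 2) → ℕ))

lemma sum_norm_wt_eq_of_init_eq (hF : ∀ w ∈ F, Fin.init w = p) :
    ∑ w ∈ F, ‖wt h w‖ =
      ‖wt h p‖ * ∑ v ∈ F.image (· (Fin.last (n + 1))), ‖h s(p (Fin.last n), v)‖ := by
  have hinj : Set.InjOn (· (Fin.last (n + 1))) (F : Set (Fin (n + 2) → ℕ)) := by
    intro w hw w' hw' hlast
    rw [← Fin.snoc_init_self w, ← Fin.snoc_init_self w', hF w hw, hF w' hw']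
    exact congrArg _ hlast
  rw [sum_image hinj, mul_sum]
  refine sum_congr rfl fun w hw => ?_
  rw [wt_eq_wt_init_mul, norm_mul, hF w hw]

lemma last_notMem_image_last (hF : ∀ w ∈ F, Fin.init w = p ∧ IsWalk w) :
    p (Fin.last n) ∉ F.image (· (Fin.last (n + 1))) := by
  simp only [mem_image, not_exists, not_and]
  intro w hw hlast
  apply (hF w hw).2 (Fin.last n)
  rw [Fin.succ_last, hlast, ← (hF w hw).1]
  rfl

lemma sum_norm_wt_le_of_init_eq {b : ℝ}
    (hb : ∀ u, ReachableIn h n u → ∀ X : Finset ℕ, u ∉ X → ∑ v ∈ X, ‖h s(u, v)‖ ≤ b)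
    (hp : p ∈ W n) (hF : ∀ w ∈ F, Fin.init w = p ∧ IsWalk w) :
    ∑ w ∈ F, ‖wt h w‖ ≤ ‖wt h p‖ * b := by
  rw [sum_norm_wt_eq_of_init_eq h p F fun w hw => (hF w hw).1]
  by_cases hwt : wt h p = 0
  · simp [hwt]
  · exact mul_le_mul_of_nonneg_left
      (hb _ (reachableIn_of_wt_ne_zero hp hwt) _ (last_notMem_image_last p F hF)) (norm_nonneg _)

end Fiber

lemma sum_norm_wt_le_prod (h : Sym2 ℕ → ℂ) (c : ℕ → ℝ) (hc0 : ∀ n, 0 ≤ c n)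
    (hc : ∀ n u, ReachableIn h n u → ∀ X : Finset ℕ, u ∉ X → ∑ v ∈ X, ‖h s(u, v)‖ ≤ c n)
    (n : ℕ) (S : Finset (Fin (n + 1) → ℕ)) (hS : ↑S ⊆ W n) :
    ∑ w ∈ S, ‖wt h w‖ ≤ ∏ k ∈ range n, c k := by
  induction n with
  | zero =>
    have hS : S ⊆ {fun _ => 1} := by rwa [W_zero, ← coe_singleton, coe_subset] at hS
    calc ∑ w ∈ S, ‖wt h w‖ ≤ ∑ w ∈ {fun _ => 1}, ‖wt h w‖ :=
          sum_le_sum_of_subset_of_nonneg hS fun _ _ _ => norm_nonneg _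
      _ = ∏ k ∈ range 0, c k := by simp [wt]
  | succ n ih =>
    have hpre : ∀ w ∈ S, Fin.init w ∈ S.image Fin.init := fun w hw => mem_image_of_mem _ hw
    have hpreW : ↑(S.image Fin.init) ⊆ W n := by
      rw [coe_image, Set.image_subset_iff]
      exact fun w hw => init_mem_W (hS hw)
    calc ∑ w ∈ S, ‖wt h w‖
        = ∑ p ∈ S.image Fin.init, ∑ w ∈ S with Fin.init w = p, ‖wt h w‖ :=
          (sum_fiberwise_of_maps_to hpre _).symm
      _ ≤ ∑ p ∈ S.image Fin.init, ‖wt h p‖ * c n := by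
          refine sum_le_sum fun p hp => sum_norm_wt_le_of_init_eq h p _ (hc n) (hpreW hp) ?_
          intro w hw
          rw [mem_filter] at hw
          exact ⟨hw.2, (hS hw.1).2⟩
      _ ≤ (∏ k ∈ range n, c k) * c n := by
          rw [← sum_mul]
          exact mul_le_mul_of_nonneg_right (ih _ hpreW) (hc0 n)
      _ = ∏ k ∈ range (n + 1), c k := (prod_range_succ c n).symm

/-- Every slim weight is light. -/
theorem stmt4 (h : Sym2 ℕ → ℂ) (hslim : Slim h) : Light h := by
  choose c hc0 hc using hslim
  intro n
  refine summable_of_sum_le (c := ∏ k ∈ range n, c k) (fun _ => norm_nonneg _) fun S => ?_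
  have hS : ↑(S.map (Function.Embedding.subtype _)) ⊆ W n := by simp
  simpa only [sum_map, Function.Embedding.subtype_apply] using
    sum_norm_wt_le_prod h c (fun k => (hc0 k).le) hc n _ hS
end

section
/- Let U, V, W ∈ ℝ≥0[[x]] with V(0) > 0 and W(0) > 0, and suppose U(x)² = 1 − V(x)/W(x) in ℂ[[x]]. If U, V, W converge absolutely for every x ∈ [0,1), the function F_V is bounded on [0,1), and the partial coefficient sums of W tend to +∞, then the partial coefficient sums of U converge and their limit is 1. -/
open Filter PowerSeries Finset
open scoped Topology

/-! Evaluating the identity `V + U² W = W` at `x ∈ (0, 1)` gives `F_V + F_U² F_W = F_W`.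
As `x → 1⁻`, `F_W(x) → ∞` because `W` has nonnegative coefficients with divergent sum, while
`F_V` stays bounded, so `F_U(x) → 1`. For nonnegative coefficients this Abel limit is the sum
of the series (a monotone Tauberian theorem). -/

section CauchyProduct

variable {R : Type*} [NormedCommRing R] {f g : PowerSeries R} {x : R}

lemma sum_antidiagonal_coeff_mul_pow_mul (n : ℕ) :
    ∑ p ∈ antidiagonal n, coeff p.1 f * x ^ p.1 * (coeff p.2 g * x ^ p.2) =
      coeff n (f * g) * x ^ n := by
  rw [coeff_mul, Finset.sum_mul]
  refine Finset.sum_congr rfl fun p hp => ?_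
  rw [← mem_antidiagonal.mp hp, pow_add]
  ring

lemma summable_norm_coeff_mul_mul_pow (hf : Summable fun n => ‖coeff n f * x ^ n‖)
    (hg : Summable fun n => ‖coeff n g * x ^ n‖) :
    Summable fun n => ‖coeff n (f * g) * x ^ n‖ := by
  simpa only [sum_antidiagonal_coeff_mul_pow_mul] using
    summable_norm_sum_mul_antidiagonal_of_summable_norm hf hg

lemma tsum_coeff_mul_mul_pow [CompleteSpace R] (hf : Summable fun n => ‖coeff n f * x ^ n‖)
    (hg : Summable fun n => ‖coeff n g * x ^ n‖) :
    ∑' n, coeff n (f * g) * x ^ n = (∑' n, coeff n f * x ^ n) * ∑' n, coeff n g * x ^ n := by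
  simp only [tsum_mul_tsum_eq_tsum_sum_antidiagonal_of_summable_norm hf hg,
    sum_antidiagonal_coeff_mul_pow_mul]

end CauchyProduct

section NonnegCoefficients

variable {a : ℕ → ℝ}

lemma tendsto_sum_range_mul_pow_nhdsLT_one (a : ℕ → ℝ) (n : ℕ) :
    Tendsto (fun x : ℝ => ∑ i ∈ range n, a i * x ^ i) (𝓝[<] 1) (𝓝 (∑ i ∈ range n, a i)) := by
  have hcont : Continuous fun x : ℝ => ∑ i ∈ range n, a i * x ^ i := by fun_prop
  simpa using hcont.continuousWithinAt.tendsto (x := 1) (s := Set.Iio 1)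

lemma eventually_sum_range_mul_pow_le_tsum (ha : ∀ n, 0 ≤ a n)
    (hsum : ∀ x ∈ Set.Ioo (0 : ℝ) 1, Summable fun n => a n * x ^ n) (n : ℕ) :
    ∀ᶠ x in 𝓝[<] (1 : ℝ), ∑ i ∈ range n, a i * x ^ i ≤ ∑' i, a i * x ^ i := by
  filter_upwards [Ioo_mem_nhdsLT zero_lt_one] with x hx
  exact (hsum x hx).sum_le_tsum _ fun i _ => mul_nonneg (ha i) (pow_nonneg hx.1.le i)

lemma tendsto_tsum_mul_pow_nhdsLT_one_atTop (ha : ∀ n, 0 ≤ a n)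
    (hsum : ∀ x ∈ Set.Ioo (0 : ℝ) 1, Summable fun n => a n * x ^ n)
    (h : Tendsto (fun n => ∑ i ∈ range n, a i) atTop atTop) :
    Tendsto (fun x => ∑' n, a n * x ^ n) (𝓝[<] 1) atTop := by
  refine tendsto_atTop.mpr fun C => ?_
  obtain ⟨n, hn⟩ := (h.eventually_gt_atTop C).exists
  filter_upwards [(tendsto_sum_range_mul_pow_nhdsLT_one a n).eventually (eventually_gt_nhds hn),
    eventually_sum_range_mul_pow_le_tsum ha hsum n] with x hCx hx
  exact hCx.le.trans hx

lemma hasSum_of_tendsto_tsum_mul_pow_nhdsLT_one {l : ℝ} (ha : ∀ n, 0 ≤ a n)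
    (hsum : ∀ x ∈ Set.Ioo (0 : ℝ) 1, Summable fun n => a n * x ^ n)
    (h : Tendsto (fun x => ∑' n, a n * x ^ n) (𝓝[<] 1) (𝓝 l)) : HasSum a l := by
  set s : ℕ → ℝ := fun n => ∑ i ∈ range n, a i
  have hs_le : ∀ n, s n ≤ l := fun n =>
    le_of_tendsto_of_tendsto (tendsto_sum_range_mul_pow_nhdsLT_one a n) h
      (eventually_sum_range_mul_pow_le_tsum ha hsum n)
  have hs_mono : Monotone s := monotone_nat_of_le_succ fun n => by
    simpa [s, sum_range_succ] using ha n
  have hs_bdd : BddAbove (Set.range s) := ⟨l, Set.forall_mem_range.mpr hs_le⟩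
  have hl_le : l ≤ ⨆ n, s n := by
    refine le_of_tendsto h ?_
    filter_upwards [Ioo_mem_nhdsLT zero_lt_one] with x hx
    refine (hsum x hx).tsum_le_of_sum_range_le fun n => ?_
    calc ∑ i ∈ range n, a i * x ^ i ≤ s n :=
          sum_le_sum fun i _ => mul_le_of_le_one_right (ha i) (pow_le_one₀ hx.1.le hx.2.le)
      _ ≤ ⨆ n, s n := le_ciSup hs_bdd n
  rw [hasSum_iff_tendsto_nat_of_nonneg ha, ← le_antisymm (ciSup_le hs_le) hl_le]
  exact tendsto_atTop_ciSup hs_mono hs_bdd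

end NonnegCoefficients

lemma tendsto_nhds_one_of_add_sq_mul_eq {α : Type*} {l : Filter α} {u v w : α → ℝ} {b B : ℝ}
    (hu : ∀ᶠ x in l, 0 ≤ u x) (hvb : ∀ᶠ x in l, b ≤ v x) (hvB : ∀ᶠ x in l, v x ≤ B)
    (hw : Tendsto w l atTop) (h : ∀ᶠ x in l, v x + u x ^ 2 * w x = w x) :
    Tendsto u l (𝓝 1) := by
  have hsqrt : Tendsto (fun x => √(1 - v x / w x)) l (𝓝 1) := by
    have hvw := tendsto_bdd_div_atTop_nhds_zero hvb hvB hw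
    simpa using ((tendsto_const_nhds (x := (1 : ℝ))).sub hvw).sqrt
  refine hsqrt.congr' ?_
  filter_upwards [hu, h, hw.eventually_gt_atTop 0] with x hux hx hwx
  have hsq : 1 - v x / w x = u x ^ 2 := by
    field_simp
    linarith
  rw [hsq, Real.sqrt_sq hux]

theorem stmt9_general (U V W : PowerSeries ℝ)
    (hUnn : ∀ n, 0 ≤ coeff n U) (hVnn : ∀ n, 0 ≤ coeff n V)
    (hWnn : ∀ n, 0 ≤ coeff n W)
    (hW0 : 0 < constantCoeff W)
    (heq : U ^ 2 = 1 - V * W⁻¹)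
    (hUconv : ∀ x : ℝ, 0 ≤ x → x < 1 → Summable fun n => coeff n U * x ^ n)
    (hVconv : ∀ x : ℝ, 0 ≤ x → x < 1 → Summable fun n => coeff n V * x ^ n)
    (hWconv : ∀ x : ℝ, 0 ≤ x → x < 1 → Summable fun n => coeff n W * x ^ n)
    (hVbdd : ∃ M : ℝ, ∀ x : ℝ, 0 ≤ x → x < 1 → (∑' n, coeff n V * x ^ n) ≤ M)
    (hWinf : Tendsto (fun n => ∑ j ∈ Finset.range (n + 1), coeff j W) atTop atTop) :
    Tendsto (fun n => ∑ j ∈ Finset.range (n + 1), coeff j U) atTop (nhds 1) := by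
  have hVUW : V + U ^ 2 * W = W := by
    rw [heq, sub_mul, mul_assoc, PowerSeries.inv_mul_cancel W hW0.ne']
    ring
  have hF : ∀ x ∈ Set.Ioo (0 : ℝ) 1, (∑' n, coeff n V * x ^ n) +
      (∑' n, coeff n U * x ^ n) ^ 2 * ∑' n, coeff n W * x ^ n = ∑' n, coeff n W * x ^ n := by
    rintro x ⟨hx0, hx1⟩
    have hU := summable_norm_iff.mpr (hUconv x hx0.le hx1)
    have hW := summable_norm_iff.mpr (hWconv x hx0.le hx1)
    have hUU := summable_norm_coeff_mul_mul_pow hU hU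
    rw [sq, ← tsum_coeff_mul_mul_pow hU hU, ← tsum_coeff_mul_mul_pow hUU hW,
      ← (hVconv x hx0.le hx1).tsum_add (summable_norm_coeff_mul_mul_pow hUU hW).of_norm]
    simp only [← add_mul, ← map_add, ← sq, hVUW]
  obtain ⟨M, hM⟩ := hVbdd
  have hFW : Tendsto (fun x => ∑' n, coeff n W * x ^ n) (𝓝[<] 1) atTop :=
    tendsto_tsum_mul_pow_nhdsLT_one_atTop hWnn (fun x hx => hWconv x hx.1.le hx.2)
      ((tendsto_add_atTop_iff_nat 1).mp hWinf)
  have hFU : Tendsto (fun x => ∑' n, coeff n U * x ^ n) (𝓝[<] 1) (𝓝 1) := by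
    have hIoo := Ioo_mem_nhdsLT (zero_lt_one' ℝ)
    refine tendsto_nhds_one_of_add_sq_mul_eq (b := 0) (B := M) ?_ ?_ ?_ hFW
      (eventually_of_mem hIoo hF)
    all_goals filter_upwards [hIoo] with x hx
    · exact tsum_nonneg fun n => mul_nonneg (hUnn n) (pow_nonneg hx.1.le n)
    · exact tsum_nonneg fun n => mul_nonneg (hVnn n) (pow_nonneg hx.1.le n)
    · exact hM x hx.1.le hx.2
  exact (tendsto_add_atTop_iff_nat 1).mpr (hasSum_of_tendsto_tsum_mul_pow_nhdsLT_one hUnn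
    (fun x hx => hUconv x hx.1.le hx.2) hFU).tendsto_sum_nat

/-- If `U² = 1 − V/W` with nonnegative real coefficients, `V(0) > 0`, `W(0) > 0`, all three
converging absolutely on `[0,1)`, `F_V` bounded on `[0,1)` and the partial coefficient sums
of `W` tending to `+∞`, then the partial coefficient sums of `U` converge to `1`. -/
theorem stmt9 (U V W : PowerSeries ℝ)
    (hUnn : ∀ n, 0 ≤ coeff n U) (hVnn : ∀ n, 0 ≤ coeff n V)
    (hWnn : ∀ n, 0 ≤ coeff n W)
    (hV0 : 0 < constantCoeff V) (hW0 : 0 < constantCoeff W)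
    (heq : U ^ 2 = 1 - V * W⁻¹)
    (hUconv : ∀ x : ℝ, 0 ≤ x → x < 1 → Summable fun n => coeff n U * x ^ n)
    (hVconv : ∀ x : ℝ, 0 ≤ x → x < 1 → Summable fun n => coeff n V * x ^ n)
    (hWconv : ∀ x : ℝ, 0 ≤ x → x < 1 → Summable fun n => coeff n W * x ^ n)
    (hVbdd : ∃ M : ℝ, ∀ x : ℝ, 0 ≤ x → x < 1 → (∑' n, coeff n V * x ^ n) ≤ M)
    (hWinf : Tendsto (fun n => ∑ j ∈ Finset.range (n + 1), coeff j W) atTop atTop) :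
    Tendsto (fun n => ∑ j ∈ Finset.range (n + 1), coeff j U) atTop (nhds 1) :=
  stmt9_general U V W hUnn hVnn hWnn hW0 heq hUconv hVconv hWconv hVbdd hWinf
end
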